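/- Let E ⊆ X × Y be measurable in a graded probability space with E d-μ-stable (d ≥ 1), and let U ⊆ X be measurable with μ(U) > 0. Then there exist m with 1 ≤ m ≤ d and σ ∈ 2^m such that the set of tuples b̄ = (b_0,...,b_{m−1}) ∈ Y^m for which U ∩ E^σ_{b̄} is perfect for E and has positive measure, itself has positive measure in Y^m. -/

import Mathlib

open Set MeasureTheory
open scoped ENNReal

/-- The index set `2^{<d}` of 0-1 sequences of length `< d`. -/
abbrev TreeIdx (d : ℕ) := (i : Fin d) × (Fin i.val → Bool)

/-- The set `E^σ_{(b_{σ|_0}, …, b_{σ|_{i-1}})}` along the branch `σ ∈ 2^i`. -/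
def branchSet {X Y : Type*} (E : Set (X × Y)) {d : ℕ} (b : TreeIdx d → Y)
    (i : Fin d) (σ : Fin i.val → Bool) : Set X :=
  {x | ∀ j : Fin i.val,
    ((x, b ⟨⟨j.1, j.2.trans i.2⟩, fun k => σ ⟨k.1, k.2.trans j.2⟩⟩) ∈ E ↔ σ j = true)}

/-- The set of μ-trees of height `d` for `E`. -/
def muTreeSet {X Y : Type*} [MeasurableSpace X] (μX : Measure X)
    (E : Set (X × Y)) (d : ℕ) : Set (TreeIdx d → Y) :=
  {b | ∀ (i : Fin d) (σ : Fin i.val → Bool),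
    0 < μX (branchSet E b i σ ∩ {x | (x, b ⟨i, σ⟩) ∈ E}) ∧
    0 < μX (branchSet E b i σ \ {x | (x, b ⟨i, σ⟩) ∈ E})}

/-- `A` is perfect for `E`: the set of `y` whose fiber μ-splits `A` has measure zero. -/
def PerfectFor {X Y : Type*} [MeasurableSpace X] [MeasurableSpace Y]
    (μX : Measure X) (μY : Measure Y) (E : Set (X × Y)) (A : Set X) : Prop :=
  μY {y | 0 < μX (A ∩ {x | (x, y) ∈ E}) ∧ 0 < μX (A \ {x | (x, y) ∈ E})} = 0


/-!
Induct on `d`, for all `U` at once; a tree of height `0` is the empty family, so the base case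
is vacuous. A tree of height `d + 1` inside `U` is a root `y` splitting `U` together with, for
each `c`, a tree of height `d` inside `U ∩ E_y^c`, and this grafting map
`Y × (Y^{2^{<d}})² → Y^{2^{<d+1}}` is measure preserving. Hence if the trees of height `d + 1`
inside `U` are null, then for almost every `y` splitting `U` the trees of height `d` inside one of
the halves `U ∩ E_y^c` are null, and the induction hypothesis applies to that half. If almost no
`y` splits `U`, then `U` is perfect, and for almost every `y` some `U ∩ E_y^c` is `U` up to a null
set. Either way, almost every relevant `y` is covered by countably many choices of `(c, m, σ)`,
one of which therefore works for a set of `y` of positive measure, and Fubini on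
`Y × Y^m ≃ Y^{m+1}` turns it into `(c :: σ, m + 1)`.
-/

namespace TreeIdx

def root (d : ℕ) : TreeIdx (d + 1) := ⟨0, Fin.elim0⟩

def child {d : ℕ} (c : Bool) (t : TreeIdx d) : TreeIdx (d + 1) := ⟨t.1.succ, Fin.cons c t.2⟩

def succEquiv (d : ℕ) : Option (Bool × TreeIdx d) ≃ TreeIdx (d + 1) where
  toFun
    | none => root d
    | some (c, t) => child c t
  invFun
    | ⟨⟨0, _⟩, _⟩ => none
    | ⟨⟨i + 1, h⟩, σ⟩ => some (σ 0, ⟨⟨i, Nat.lt_of_succ_lt_succ h⟩, Fin.tail σ⟩)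
  left_inv := by rintro (_ | ⟨c, ⟨i, τ⟩⟩) <;> rfl
  right_inv := by
    rintro ⟨⟨_ | i, h⟩, σ⟩
    · exact Sigma.ext rfl (heq_of_eq (funext fun k => k.elim0))
    · exact congrArg _ (Fin.cons_self_tail σ)

lemma forall_succ {d : ℕ} {p : TreeIdx (d + 1) → Prop} :
    (∀ j, p j) ↔ p (root d) ∧ ∀ c t, p (child c t) := by
  rw [← (succEquiv d).forall_congr_right, Option.forall, Prod.forall]
  rfl

end TreeIdx

section Cells

variable {X Y : Type*} (E : Set (X × Y))

def signedFiber (c : Bool) (y : Y) : Set X := {x | (x, y) ∈ E ↔ c = true}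

def cell {ι : Type*} (σ : ι → Bool) (b : ι → Y) : Set X :=
  {x | ∀ i, (x, b i) ∈ E ↔ σ i = true}

lemma signedFiber_true (y : Y) : signedFiber E true y = {x | (x, y) ∈ E} := by simp [signedFiber]

lemma signedFiber_false (y : Y) : signedFiber E false y = {x | (x, y) ∈ E}ᶜ := by
  ext x
  simp [signedFiber]

lemma cell_cons {m : ℕ} (c : Bool) (σ : Fin m → Bool) (b : Fin (m + 1) → Y) :
    cell E (Fin.cons c σ) b = signedFiber E c (b 0) ∩ cell E σ (Fin.tail b) := by
  ext x
  simp [cell, signedFiber, Fin.forall_fin_succ, Fin.tail]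

lemma cell_of_isEmpty {ι : Type*} [IsEmpty ι] (σ : ι → Bool) (b : ι → Y) :
    cell E σ b = univ :=
  eq_univ_of_forall fun _ i => isEmptyElim i

end Cells

section Graft

variable {X Y : Type*} {d : ℕ}

def graft (y : Y) (g : Bool → TreeIdx d → Y) (j : TreeIdx (d + 1)) : Y :=
  ((TreeIdx.succEquiv d).symm j).elim y fun ct => g ct.1 ct.2

@[simp] lemma graft_root (y : Y) (g : Bool → TreeIdx d → Y) : graft y g (.root d) = y := rfl

@[simp] lemma graft_child (y : Y) (g : Bool → TreeIdx d → Y) (c : Bool) (t : TreeIdx d) :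
    graft y g (.child c t) = g c t := rfl

lemma branchSet_root (E : Set (X × Y)) (b : TreeIdx (d + 1) → Y) :
    branchSet E b (TreeIdx.root d).1 (TreeIdx.root d).2 = univ :=
  eq_univ_of_forall fun _ i => i.elim0

lemma branchSet_graft_child (E : Set (X × Y)) (y : Y) (g : Bool → TreeIdx d → Y) (c : Bool)
    (t : TreeIdx d) :
    branchSet E (graft y g) (TreeIdx.child c t).1 (TreeIdx.child c t).2 =
      signedFiber E c y ∩ branchSet E (g c) t.1 t.2 := by
  ext x
  exact Fin.forall_fin_succ

end Graft

section GraftMeasure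

variable {Y : Type*} [MeasurableSpace Y] {d : ℕ}

lemma measurable_graft :
    Measurable fun p : Y × (Bool → TreeIdx d → Y) => graft p.1 p.2 := by
  refine measurable_pi_iff.mpr fun j => ?_
  obtain ⟨_ | ⟨c, t⟩, rfl⟩ := (TreeIdx.succEquiv d).surjective j
  · exact measurable_fst
  · exact (measurable_pi_apply t).comp ((measurable_pi_apply c).comp measurable_snd)

lemma measurePreserving_graft (μ : Measure Y) [SigmaFinite μ] :
    MeasurePreserving (fun p : Y × (Bool → TreeIdx d → Y) => graft p.1 p.2)
      (μ.prod (Measure.pi fun _ => Measure.pi fun _ => μ)) (Measure.pi fun _ => μ) := by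
  refine ⟨measurable_graft, (Measure.pi_eq fun s hs => ?_).symm⟩
  have hpre : (fun p : Y × (Bool → TreeIdx d → Y) => graft p.1 p.2) ⁻¹' univ.pi s =
      s (.root d) ×ˢ univ.pi fun c => univ.pi fun t => s (.child c t) := by
    ext p
    simp only [mem_preimage, mem_univ_pi, mem_prod, TreeIdx.forall_succ, graft_root, graft_child]
  rw [Measure.map_apply measurable_graft (.univ_pi hs), hpre, Measure.prod_prod, Measure.pi_pi]
  simp_rw [Measure.pi_pi]
  rw [← (TreeIdx.succEquiv d).prod_comp, Fintype.prod_option, Fintype.prod_prod_type]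
  rfl

end GraftMeasure

lemma MeasureTheory.exists_measure_setOf_pos_of_ae {α ι : Type*} [MeasurableSpace α]
    [Countable ι] {μ : Measure α} {s : Set α} {p : ι → α → Prop} (hs : 0 < μ s)
    (h : ∀ᵐ a ∂μ, a ∈ s → ∃ i, p i a) : ∃ i, 0 < μ {a | p i a} :=
  exists_measure_pos_of_not_measure_iUnion_null fun h0 =>
    hs.ne' (measure_mono_null_ae (h.mono fun _ ha hs => mem_iUnion.mpr (ha hs)) h0)

lemma MeasureTheory.Measure.prod_pos_of_measure_setOf_pos {α β : Type*} [MeasurableSpace α]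
    [MeasurableSpace β] {μ : Measure α} {ν : Measure β} [SFinite ν] {s : Set (α × β)}
    (h : 0 < μ {a | 0 < ν (Prod.mk a ⁻¹' s)}) : 0 < μ.prod ν s := by
  refine pos_iff_ne_zero.mpr fun h0 => h.ne' (measure_eq_zero_iff_ae_notMem.mpr ?_)
  filter_upwards [Measure.measure_ae_null_of_prod_null h0] with a ha
  simp [ha]

section Splitting

variable {X Y : Type*} [MeasurableSpace X] (μX : Measure X) (E : Set (X × Y))

def splitters (A : Set X) : Set Y :=
  {y | 0 < μX (A ∩ {x | (x, y) ∈ E}) ∧ 0 < μX (A \ {x | (x, y) ∈ E})}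

def treesIn (d : ℕ) (U : Set X) : Set (TreeIdx d → Y) :=
  {b | ∀ j, b j ∈ splitters μX E (U ∩ branchSet E b j.1 j.2)}

variable {μX E}

lemma splitters_mono {A B : Set X} (h : A ⊆ B) : splitters μX E A ⊆ splitters μX E B :=
  fun _ hy => ⟨hy.1.trans_le (measure_mono (inter_subset_inter_left _ h)),
    hy.2.trans_le (measure_mono (sdiff_subset_sdiff_left h))⟩

lemma splitters_congr {A B : Set X} (h : A =ᵐ[μX] B) :
    splitters μX E A = splitters μX E B := by
  ext y
  exact and_congr (iff_of_eq (congrArg _ (measure_congr (ae_eq_set_inter h (ae_eq_refl _)))))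
    (iff_of_eq (congrArg _ (measure_congr (ae_eq_set_sdiff h (ae_eq_refl _)))))

lemma measure_inter_signedFiber_pos {A : Set X} {y : Y} (hy : y ∈ splitters μX E A) (c : Bool) :
    0 < μX (A ∩ signedFiber E c y) := by
  cases c
  · rw [signedFiber_false, ← sdiff_eq]
    exact hy.2
  · rw [signedFiber_true]
    exact hy.1

lemma treesIn_subset_muTreeSet (d : ℕ) (U : Set X) : treesIn μX E d U ⊆ muTreeSet μX E d :=
  fun _ hb i σ => splitters_mono inter_subset_right (hb ⟨i, σ⟩)

lemma treesIn_zero (U : Set X) : treesIn μX E 0 U = univ :=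
  eq_univ_of_forall fun _ j => j.1.elim0

lemma graft_mem_treesIn {d : ℕ} {U : Set X} {y : Y} {g : Bool → TreeIdx d → Y}
    (hy : y ∈ splitters μX E U) (hg : ∀ c, g c ∈ treesIn μX E d (U ∩ signedFiber E c y)) :
    graft y g ∈ treesIn μX E (d + 1) U := by
  refine TreeIdx.forall_succ.mpr ⟨?_, fun c t => ?_⟩
  · rw [branchSet_root, inter_univ]
    exact hy
  · rw [graft_child, branchSet_graft_child, ← inter_assoc]
    exact hg c t

end Splitting

section Perfect

variable {X Y : Type*} [MeasurableSpace X] [MeasurableSpace Y] {μX : Measure X} {μY : Measure Y}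
  {E : Set (X × Y)}

lemma PerfectFor.congr_ae {A B : Set X} (hA : PerfectFor μX μY E A) (h : A =ᵐ[μX] B) :
    PerfectFor μX μY E B :=
  (congrArg μY (splitters_congr h)).symm.trans hA

lemma ae_perfectFor_inter_signedFiber {A : Set X} (hA : PerfectFor μX μY E A) (hA0 : 0 < μX A) :
    ∀ᵐ y ∂μY, ∃ c, PerfectFor μX μY E (A ∩ signedFiber E c y) ∧
      0 < μX (A ∩ signedFiber E c y) := by
  filter_upwards [measure_eq_zero_iff_ae_notMem.mp hA] with y hy
  obtain ⟨c, hc⟩ : ∃ c, μX (A \ signedFiber E c y) = 0 := by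
    simp only [not_and_or, not_lt, nonpos_iff_eq_zero] at hy
    rcases hy with h | h
    · exact ⟨false, by rwa [signedFiber_false, sdiff_compl]⟩
    · exact ⟨true, by rwa [signedFiber_true]⟩
  have hae : (A ∩ signedFiber E c y : Set X) =ᵐ[μX] A :=
    ae_eq_set.mpr ⟨measure_mono_null (fun _ hx => hx.2 hx.1.1) measure_empty,
      by rwa [sdiff_self_inter]⟩
  exact ⟨c, hA.congr_ae hae.symm, (measure_congr hae).symm ▸ hA0⟩

end Perfect

section Induction

variable {X Y : Type*} [MeasurableSpace X] [MeasurableSpace Y] {μX : Measure X} {μY : Measure Y}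
  {E : Set (X × Y)}

variable (μX μY E) in
def perfectCells (U : Set X) {m : ℕ} (σ : Fin m → Bool) : Set (Fin m → Y) :=
  {b | PerfectFor μX μY E (U ∩ cell E σ b) ∧ 0 < μX (U ∩ cell E σ b)}

lemma pi_perfectCells_zero_pos [SigmaFinite μY] {U : Set X} (σ : Fin 0 → Bool)
    (hU : PerfectFor μX μY E U ∧ 0 < μX U) :
    0 < Measure.pi (fun _ => μY) (perfectCells μX μY E U σ) := by
  have : perfectCells μX μY E U σ = univ :=
    eq_univ_of_forall fun b => by simpa [perfectCells, cell_of_isEmpty] using hU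
  simp [this]

lemma pi_perfectCells_cons_pos [SigmaFinite μY] {U : Set X} {m : ℕ} (c : Bool)
    (σ : Fin m → Bool)
    (h : 0 < μY {y |
      0 < Measure.pi (fun _ => μY) (perfectCells μX μY E (U ∩ signedFiber E c y) σ)}) :
    0 < Measure.pi (fun _ => μY) (perfectCells μX μY E U (Fin.cons c σ)) := by
  have hpre : perfectCells μX μY E U (Fin.cons c σ) =
      MeasurableEquiv.piFinSuccAbove (fun _ => Y) 0 ⁻¹'
        {p | p.2 ∈ perfectCells μX μY E (U ∩ signedFiber E c p.1) σ} := by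
    ext b
    simp [perfectCells, cell_cons, inter_assoc]
  rw [hpre, ← MeasurableEquiv.map_apply, (measurePreserving_piFinSuccAbove _ 0).map_eq]
  exact Measure.prod_pos_of_measure_setOf_pos h

lemma ae_exists_treesIn_null [SigmaFinite μY] {d : ℕ} {U : Set X}
    (hU : Measure.pi (fun _ => μY) (treesIn μX E (d + 1) U) = 0) :
    ∀ᵐ y ∂μY, y ∈ splitters μX E U →
      ∃ c, Measure.pi (fun _ => μY) (treesIn μX E d (U ∩ signedFiber E c y)) = 0 := by
  set S := {p : Y × (Bool → TreeIdx d → Y) |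
    p.1 ∈ splitters μX E U ∧ ∀ c, p.2 c ∈ treesIn μX E d (U ∩ signedFiber E c p.1)}
  have hS : (μY.prod (Measure.pi fun _ => Measure.pi fun _ => μY)) S = 0 :=
    measure_mono_null (fun p hp => graft_mem_treesIn hp.1 hp.2)
      ((measurePreserving_graft μY).quasiMeasurePreserving.preimage_null hU)
  filter_upwards [Measure.measure_ae_null_of_prod_null hS] with y hy hys
  have hfiber :
      Prod.mk y ⁻¹' S = univ.pi fun c => treesIn μX E d (U ∩ signedFiber E c y) := by
    ext g
    simp [S, hys]
  rw [Pi.zero_apply, hfiber, Measure.pi_pi, Finset.prod_eq_zero_iff] at hy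
  obtain ⟨c, -, hc⟩ := hy
  exact ⟨c, hc⟩

theorem exists_pi_perfectCells_pos [SigmaFinite μY] [NeZero μY] (d : ℕ) (U : Set X)
    (hU : Measure.pi (fun _ => μY) (treesIn μX E d U) = 0) (hU0 : 0 < μX U) :
    ∃ m, 1 ≤ m ∧ m ≤ d ∧ ∃ σ : Fin m → Bool,
      0 < Measure.pi (fun _ => μY) (perfectCells μX μY E U σ) := by
  induction d generalizing U with
  | zero => simp [treesIn_zero] at hU
  | succ d ih =>
    suffices ∃ i : Bool × Σ m : Fin (d + 1), (Fin m → Bool), 0 < μY {y |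
        0 < Measure.pi (fun _ => μY) (perfectCells μX μY E (U ∩ signedFiber E i.1 y) i.2.2)} by
      obtain ⟨⟨c, m, σ⟩, h⟩ := this
      exact ⟨m + 1, by omega, by omega, Fin.cons c σ, pi_perfectCells_cons_pos c σ h⟩
    by_cases hperf : PerfectFor μX μY E U
    · refine exists_measure_setOf_pos_of_ae (Measure.measure_univ_pos.mpr (NeZero.ne μY)) ?_
      filter_upwards [ae_perfectFor_inter_signedFiber hperf hU0] with y ⟨c, hc⟩ _
      exact ⟨(c, ⟨0, Fin.elim0⟩), pi_perfectCells_zero_pos _ hc⟩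
    · refine exists_measure_setOf_pos_of_ae (pos_iff_ne_zero.mpr hperf) ?_
      filter_upwards [ae_exists_treesIn_null hU] with y hy hys
      obtain ⟨c, hc⟩ := hy hys
      obtain ⟨m, -, hmd, σ, hσ⟩ :=
        ih (U ∩ signedFiber E c y) hc (measure_inter_signedFiber_pos hys c)
      exact ⟨(c, ⟨⟨m, by omega⟩, σ⟩), hσ⟩

end Induction

theorem pos_measure_of_perfect_sets_general
    {X Y : Type*} [MeasurableSpace X] [MeasurableSpace Y]
    (μX : Measure X) (μY : Measure Y)
    [IsProbabilityMeasure μY]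
    (E : Set (X × Y)) (d : ℕ)
    (hstab : (Measure.pi fun _ : TreeIdx d => μY) (muTreeSet μX E d) = 0)
    (U : Set X) (hU0 : 0 < μX U) :
    ∃ m : ℕ, 1 ≤ m ∧ m ≤ d ∧ ∃ σ : Fin m → Bool,
      0 < (Measure.pi fun _ : Fin m => μY)
        {b : Fin m → Y |
          PerfectFor μX μY E (U ∩ {x | ∀ i : Fin m, ((x, b i) ∈ E ↔ σ i = true)}) ∧
          0 < μX (U ∩ {x | ∀ i : Fin m, ((x, b i) ∈ E ↔ σ i = true)})} :=
  exists_pi_perfectCells_pos d U (measure_mono_null (treesIn_subset_muTreeSet d U) hstab) hU0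

/-- For a `d`-μ-stable relation `E` and a positive measure set `U`, for some `1 ≤ m ≤ d`
and `σ ∈ 2^m`, a positive measure of the tuples `b̄ ∈ Y^m` cut out a perfect subset
`U ∩ E^σ_{b̄}` of positive measure. -/
theorem pos_measure_of_perfect_sets
    {X Y : Type*} [MeasurableSpace X] [MeasurableSpace Y]
    (μX : Measure X) (μY : Measure Y)
    [IsProbabilityMeasure μX] [IsProbabilityMeasure μY]
    (E : Set (X × Y)) (hE : MeasurableSet E) (d : ℕ) (hd : 1 ≤ d)
    (hstab : (Measure.pi fun _ : TreeIdx d => μY) (muTreeSet μX E d) = 0)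
    (U : Set X) (hU : MeasurableSet U) (hU0 : 0 < μX U) :
    ∃ m : ℕ, 1 ≤ m ∧ m ≤ d ∧ ∃ σ : Fin m → Bool,
      0 < (Measure.pi fun _ : Fin m => μY)
        {b : Fin m → Y |
          PerfectFor μX μY E (U ∩ {x | ∀ i : Fin m, ((x, b i) ∈ E ↔ σ i = true)}) ∧
          0 < μX (U ∩ {x | ∀ i : Fin m, ((x, b i) ∈ E ↔ σ i = true)})} :=
  pos_measure_of_perfect_sets_general μX μY E d hstab U hU0
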